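/- Let δ be a diagonal section of a semilinear quasi-copula; i.e., δ is non-decreasing, 2-Lipschitz, 0 ≤ δ(x) ≤ x, δ(1)=1, x ↦ δ(x)/x is non-decreasing on (0,1], and (δ(x)/x)' ≤ 1/x almost everywhere. Then δ(x) ≥ x + x·ln(x) for all x ∈ (0,1]. Moreover, if δ(x₀) = x₀ + x₀·ln(x₀) for some x₀ ∈ (0,1], then δ(x) = x + x·ln(x) for all x ∈ [x₀,1]. -/

import Mathlib

/-- Diagonal section of a semilinear quasi-copula: non-decreasing, 2-Lipschitz,
`0 ≤ δ(x) ≤ x`, `δ(1)=1`, `δ(x)/x` non-decreasing on `(0,1]`, and the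
difference-quotient bound `x₁·(η(x₂)−η(x₁))/(x₂−x₁) ≤ 1` (equivalently
`(δ(x)/x)' ≤ 1/x` a.e.). -/
def IsQuasiCopulaDiagonal (d : ℝ → ℝ) : Prop :=
  MonotoneOn d (Set.Icc 0 1) ∧
  (∀ s ∈ Set.Icc (0:ℝ) 1, ∀ t ∈ Set.Icc (0:ℝ) 1, |d s - d t| ≤ 2 * |s - t|) ∧
  (∀ x ∈ Set.Icc (0:ℝ) 1, 0 ≤ d x ∧ d x ≤ x) ∧ d 1 = 1 ∧
  MonotoneOn (fun x => d x / x) (Set.Ioc (0:ℝ) 1) ∧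
  (∀ x₁ x₂ : ℝ, 0 < x₁ → x₁ < x₂ → x₂ ≤ 1 →
    x₁ * ((d x₂ / x₂ - d x₁ / x₁) / (x₂ - x₁)) ≤ 1)

theorem qd_key (d : ℝ → ℝ) (hd : IsQuasiCopulaDiagonal d)
    (a b : ℝ) (ha : 0 < a) (hab : a ≤ b) (hb1 : b ≤ 1) :
    d b / b - d a / a ≤ Real.log b - Real.log a := by
  obtain ⟨-, -, -, -, -, hdq⟩ := hd
  rcases eq_or_lt_of_le hab with rfl | hab
  · simp
  -- per-step bound
  have step : ∀ p q : ℝ, a ≤ p → p < q → q ≤ b →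
      d q / q - d p / p ≤ (Real.log q - Real.log p) + (q - p)^2 / a^2 := by
    intro p q hap hpq hqb
    have hp : 0 < p := lt_of_lt_of_le ha hap
    have hq : 0 < q := hp.trans hpq
    have haq : a ≤ q := hap.trans hpq.le
    have hqp : 0 < q - p := sub_pos.mpr hpq
    have h6 := hdq p q hp hpq (hqb.trans hb1)
    have h1' : d q / q - d p / p ≤ (q - p) / p := by
      have ht : (d q / q - d p / p) / (q - p) ≤ 1 / p := by
        rw [le_div_iff₀ hp]; linarith [mul_comm p ((d q / q - d p / p) / (q - p))]
      have e : d q / q - d p / p = (d q / q - d p / p) / (q - p) * (q - p) := by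
        field_simp
      have h2 := mul_le_mul_of_nonneg_right ht hqp.le
      have e2 : 1 / p * (q - p) = (q - p) / p := by ring
      linarith [e ▸ h2]
    have hlog : (q - p) / q ≤ Real.log q - Real.log p := by
      have h := Real.log_le_sub_one_of_pos (div_pos hp hq)
      rw [Real.log_div hp.ne' hq.ne'] at h
      have e : (q - p) / q = 1 - p / q := by field_simp
      linarith
    have h2 : (q - p) / p - (q - p) / q = (q - p)^2 / (p * q) := by
      field_simp
    have h3 : (q - p)^2 / (p * q) ≤ (q - p)^2 / a^2 := by
      gcongr <;> nlinarith
    linarith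
  -- bound for each n
  have main : ∀ n : ℕ, 0 < n →
      d b / b - d a / a ≤ Real.log b - Real.log a + (b - a)^2 / a^2 / n := by
    intro n hn
    have hn' : (0:ℝ) < n := Nat.cast_pos.mpr hn
    set Δ : ℝ := (b - a) / n with hΔ
    have hΔpos : 0 < Δ := div_pos (sub_pos.mpr hab) hn'
    set x : ℕ → ℝ := fun i => a + i * Δ with hx
    have hxb : x n = b := by
      simp only [hx, hΔ]; field_simp; ring
    have hx0 : x 0 = a := by simp [hx]
    have hstep : ∀ i : ℕ, x i < x (i + 1) := by
      intro i; simp only [hx]; push_cast; nlinarith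
    have hge : ∀ i : ℕ, a ≤ x i := by
      intro i; simp only [hx]
      have : (0:ℝ) ≤ i := Nat.cast_nonneg i
      nlinarith
    have hle : ∀ i : ℕ, i ≤ n → x i ≤ b := by
      intro i hi
      have : x i ≤ x n := by
        simp only [hx]
        have : (i : ℝ) ≤ n := Nat.cast_le.mpr hi
        nlinarith
      linarith [hxb ▸ this]
    have hdiff : ∀ i : ℕ, x (i + 1) - x i = Δ := by
      intro i; simp only [hx]; push_cast; ring
    have hsum : ∑ i ∈ Finset.range n, (d (x (i+1)) / x (i+1) - d (x i) / x i) ≤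
        ∑ i ∈ Finset.range n, ((Real.log (x (i+1)) - Real.log (x i)) + Δ^2 / a^2) := by
      apply Finset.sum_le_sum
      intro i hi
      have h := step (x i) (x (i+1)) (hge i) (hstep i) (hle (i+1) (Finset.mem_range.mp hi))
      rwa [hdiff i] at h
    rw [Finset.sum_range_sub (fun i => d (x i) / x i)] at hsum
    rw [Finset.sum_add_distrib, Finset.sum_range_sub (fun i => Real.log (x i)),
      Finset.sum_const, Finset.card_range, nsmul_eq_mul] at hsum
    rw [hxb, hx0] at hsum
    have e3 : (n : ℝ) * (Δ^2 / a^2) = (b - a)^2 / a^2 / n := by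
      rw [hΔ]; field_simp
    linarith [e3 ▸ hsum]
  -- take limit
  refine le_of_forall_pos_le_add ?_
  intro ε hε
  obtain ⟨n, hn⟩ := exists_nat_gt ((b - a)^2 / a^2 / ε)
  have hpos : (0:ℝ) < (b - a)^2 / a^2 / ε :=
    div_pos (div_pos (pow_pos (sub_pos.mpr hab) 2) (pow_pos ha 2)) hε
  have hn0 : 0 < n := by exact_mod_cast hpos.trans hn
  have hn' : (0:ℝ) < n := Nat.cast_pos.mpr hn0
  have h := main n hn0
  have : (b - a)^2 / a^2 / n < ε := by
    rw [div_lt_iff₀ hn']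
    rw [div_lt_iff₀ hε] at hn
    linarith [mul_comm ε (n:ℝ)]
  linarith

theorem quasi_diagonal_lower_bound (d : ℝ → ℝ) (hd : IsQuasiCopulaDiagonal d) :
    (∀ x ∈ Set.Ioc (0:ℝ) 1, x + x * Real.log x ≤ d x) ∧
    (∀ x₀ ∈ Set.Ioc (0:ℝ) 1, d x₀ = x₀ + x₀ * Real.log x₀ →
      ∀ x ∈ Set.Icc x₀ 1, d x = x + x * Real.log x) := by
  have h1 : d 1 = 1 := hd.2.2.2.1
  have lower : ∀ x ∈ Set.Ioc (0:ℝ) 1, x + x * Real.log x ≤ d x := by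
    rintro x ⟨hx0, hx1⟩
    have h := qd_key d hd x 1 hx0 hx1 le_rfl
    rw [h1, Real.log_one] at h
    -- h : 1/1 - d x / x ≤ 0 - log x
    have h' : 1 + Real.log x ≤ d x / x := by
      simp only [div_one] at h; linarith
    rw [le_div_iff₀ hx0] at h'
    nlinarith
  refine ⟨lower, ?_⟩
  rintro x₀ ⟨hx₀0, hx₀1⟩ heq x ⟨hxl, hxr⟩
  have hx0 : 0 < x := hx₀0.trans_le hxl
  have hupper : d x / x ≤ 1 + Real.log x := by
    have h := qd_key d hd x₀ x hx₀0 hxl hxr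
    have e : d x₀ / x₀ = 1 + Real.log x₀ := by
      rw [heq]; field_simp
    rw [e] at h; linarith
  have hlower := lower x ⟨hx0, hxr⟩
  rw [div_le_iff₀ hx0] at hupper
  nlinarith
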